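/- The Laplace transform of t ↦ t^{β-1} E_{α,β}(λ t^α) is ς^{α-β}/(ς^α - λ), i.e. ∫_0^∞ e^{-ς t} t^{β-1} E_{α,β}(λ t^α) dt = ς^{α-β}/(ς^α - λ) for real ς > 0 with ς^α > |λ|, where 0 < α ≤ 1, β > 0. -/

import Mathlib

/-!
Expanding the Mittag-Leffler series, the integrand is `∑ₖ λᵏ t^(αk+β-1) e^(-ςt) / Γ(αk+β)`,
and the Gamma integral gives each term the Laplace transform `λᵏ ς^(-(αk+β))`. The series of the
absolute values of these transforms is geometric with ratio `|λ| / ς^α < 1`, so integral and sum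
may be interchanged, and summing `ς^(-β) ∑ₖ (λ / ς^α)ᵏ` gives the result.
-/

open MeasureTheory

/-- The generalized Mittag-Leffler function `E_{α,β}`. -/
noncomputable def mittagLeffler (α β z : ℝ) : ℝ :=
  ∑' k : ℕ, z ^ k / Real.Gamma (α * k + β)

open Set Real

section GammaKernel

variable {s b : ℝ}

theorem integral_rpow_div_Gamma_mul_exp_neg_mul_Ioi (hs : 0 < s) (hb : 0 < b) :
    ∫ t in Ioi (0 : ℝ), t ^ (s - 1) / Gamma s * exp (-(b * t)) = (b ^ s)⁻¹ := by
  simp_rw [div_mul_eq_mul_div]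
  rw [integral_div, integral_rpow_mul_exp_neg_mul_Ioi hs hb,
    mul_div_cancel_right₀ _ (Gamma_pos_of_pos hs).ne', one_div, inv_rpow hb.le]

theorem integrableOn_rpow_div_Gamma_mul_exp_neg_mul_Ioi (hs : 0 < s) (hb : 0 < b) :
    IntegrableOn (fun t => t ^ (s - 1) / Gamma s * exp (-(b * t))) (Ioi 0) :=
  .of_integral_ne_zero (by rw [integral_rpow_div_Gamma_mul_exp_neg_mul_Ioi hs hb]; positivity)

end GammaKernel

theorem integral_tsum_mul_rpow_div_Gamma_mul_exp_neg_mul_Ioi {c s : ℕ → ℝ} {b : ℝ}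
    (hs : ∀ k, 0 < s k) (hb : 0 < b) (hsum : Summable fun k => |c k| * (b ^ s k)⁻¹) :
    ∫ t in Ioi (0 : ℝ), ∑' k, c k * (t ^ (s k - 1) / Gamma (s k) * exp (-(b * t))) =
      ∑' k, c k * (b ^ s k)⁻¹ := by
  have hint k := (integrableOn_rpow_div_Gamma_mul_exp_neg_mul_Ioi (hs k) hb).const_mul (c k)
  have hnorm k :
      ∫ t in Ioi (0 : ℝ), ‖c k * (t ^ (s k - 1) / Gamma (s k) * exp (-(b * t)))‖ =
        |c k| * (b ^ s k)⁻¹ := by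
    rw [setIntegral_congr_fun measurableSet_Ioi fun t (ht : 0 < t) => by
        rw [norm_mul, norm_eq_abs, norm_of_nonneg (by have := Gamma_pos_of_pos (hs k); positivity)],
      integral_const_mul, integral_rpow_div_Gamma_mul_exp_neg_mul_Ioi (hs k) hb]
  rw [← integral_tsum_of_summable_integral_norm hint (by simpa only [hnorm] using hsum)]
  simp only [integral_const_mul, integral_rpow_div_Gamma_mul_exp_neg_mul_Ioi (hs _) hb]

theorem exp_mul_rpow_mul_mittagLeffler (α β lam ς : ℝ) {t : ℝ} (ht : 0 < t) :
    exp (-(ς * t)) * t ^ (β - 1) * mittagLeffler α β (lam * t ^ α) =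
      ∑' k : ℕ, lam ^ k * (t ^ (α * k + β - 1) / Gamma (α * k + β) * exp (-(ς * t))) := by
  rw [mittagLeffler, ← tsum_mul_left]
  refine tsum_congr fun k => ?_
  rw [mul_pow, ← rpow_mul_natCast ht.le, add_sub_assoc, rpow_add ht]
  ring

theorem laplace_mittagLeffler_general (α β ς lam : ℝ) (hα0 : 0 < α)
    (hβ : 0 < β) (hς : 0 < ς) (hdom : |lam| < ς ^ α) :
    ∫ t in Set.Ioi (0 : ℝ),
        Real.exp (-(ς * t)) * t ^ (β - 1) * mittagLeffler α β (lam * t ^ α) =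
      ς ^ (α - β) / (ς ^ α - lam) := by
  have hςα : 0 < ς ^ α := rpow_pos_of_pos hς α
  have hratio : |lam| / ς ^ α < 1 := (div_lt_one hςα).2 hdom
  have hterm (c : ℝ) (k : ℕ) :
      c ^ k * (ς ^ (α * k + β))⁻¹ = (ς ^ β)⁻¹ * (c / ς ^ α) ^ k := by
    rw [rpow_add hς, rpow_mul_natCast hς.le, div_pow]
    field_simp
  rw [setIntegral_congr_fun measurableSet_Ioi fun t ht =>
      exp_mul_rpow_mul_mittagLeffler α β lam ς ht,
    integral_tsum_mul_rpow_div_Gamma_mul_exp_neg_mul_Ioi (fun k => by positivity) hς]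
  · have hne : ς ^ α - lam ≠ 0 := by linarith [le_abs_self lam]
    have hratio_signed : |lam / ς ^ α| < 1 := by rwa [abs_div, abs_of_pos hςα]
    simp_rw [hterm, tsum_mul_left, tsum_geometric_of_abs_lt_one hratio_signed, rpow_sub hς]
    field_simp
  · simp_rw [abs_pow, hterm]
    exact (summable_geometric_of_lt_one (by positivity) hratio).mul_left _

theorem laplace_mittagLeffler (α β ς lam : ℝ) (hα0 : 0 < α) (hα1 : α ≤ 1)
    (hβ : 0 < β) (hς : 0 < ς) (hdom : |lam| < ς ^ α) :
    ∫ t in Set.Ioi (0 : ℝ),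
        Real.exp (-(ς * t)) * t ^ (β - 1) * mittagLeffler α β (lam * t ^ α) =
      ς ^ (α - β) / (ς ^ α - lam) :=
  laplace_mittagLeffler_general α β ς lam hα0 hβ hς hdom
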